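/- Let S be a finite planar point set in general position in which every point is an extreme point except exactly one interior point c0 (a wheel set), with n = |S| ≥ 4. Then every plane spanning path on S contains at least one edge of the boundary of the convex hull of S. -/

import Mathlib

open scoped Classical

noncomputable section

abbrev Pt : Type := ℝ × ℝ

/-- default point -/
def pd : Pt := (0, 0)

/-- No three distinct points of `S` are collinear. -/
def GenPos (S : Finset Pt) : Prop :=
  ∀ p ∈ S, ∀ q ∈ S, ∀ r ∈ S, p ≠ q → p ≠ r → q ≠ r →
    ¬ Collinear ℝ ({p, q, r} : Set Pt)

/-- The (ordered) edges of a path given as a list of vertices. -/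
def pathEdges (l : List Pt) : List (Pt × Pt) := l.zip l.tail

/-- The (ordered) edges of a cycle given as a list of vertices. -/
def cycleEdges (l : List Pt) : List (Pt × Pt) := l.zip (l.rotate 1)

/-- A family of straight-line segments is pairwise non-crossing:
the open segments of any two distinct members are disjoint. -/
def NonCrossing (E : List (Pt × Pt)) : Prop :=
  E.Pairwise fun e f => openSegment ℝ e.1 e.2 ∩ openSegment ℝ f.1 f.2 = ∅

/-- `l` is a plane (crossing-free) straight-line spanning path of `S`. -/
def IsPlanePath (S : Finset Pt) (l : List Pt) : Prop :=
  l.Nodup ∧ l.toFinset = S ∧ NonCrossing (pathEdges l)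

/-- `l` is a plane straight-line spanning cycle of `S`. -/
def IsPlaneCycle (S : Finset Pt) (l : List Pt) : Prop :=
  3 ≤ l.length ∧ l.Nodup ∧ l.toFinset = S ∧ NonCrossing (cycleEdges l)

/-- The set of edges of a path, as unordered pairs. -/
def edgeSet (l : List Pt) : Finset (Sym2 Pt) :=
  ((pathEdges l).map fun e => s(e.1, e.2)).toFinset

/-- The set of edges of a cycle, as unordered pairs. -/
def cycleEdgeSet (l : List Pt) : Finset (Sym2 Pt) :=
  ((cycleEdges l).map fun e => s(e.1, e.2)).toFinset

/-- No segment joining two points of `S` crosses any edge of the cycle `l`. -/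
def UncrossedCycle (S : Finset Pt) (l : List Pt) : Prop :=
  ∀ a ∈ S, ∀ b ∈ S, a ≠ b → ∀ e ∈ cycleEdges l, s(a, b) ≠ s(e.1, e.2) →
    openSegment ℝ a b ∩ openSegment ℝ e.1 e.2 = ∅

/-- Two plane spanning paths of `S` differ by a single flip. -/
def FlipAdj (S : Finset Pt) (P Q : List Pt) : Prop :=
  IsPlanePath S P ∧ IsPlanePath S Q ∧
    ∃ e f, e ≠ f ∧ e ∈ edgeSet P ∧ f ∈ edgeSet Q ∧
      (edgeSet P).erase e = (edgeSet Q).erase f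

/-- There is a sequence of `k` flips from `P` to (a representative of) `Q`, all of whose
members are plane spanning paths of `S` satisfying the additional property `A`. -/
def FlipSeq (S : Finset Pt) (A : List Pt → Prop) (k : ℕ) (P Q : List Pt) : Prop :=
  ∃ f : ℕ → List Pt, f 0 = P ∧ edgeSet (f k) = edgeSet Q ∧
    (∀ i ≤ k, IsPlanePath S (f i) ∧ A (f i)) ∧
    ∀ i < k, FlipAdj S (f i) (f (i + 1))

/-- The flip graph on the plane spanning paths of `S` satisfying `A` is connected. -/
def FlipConnected (S : Finset Pt) (A : List Pt → Prop) : Prop :=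
  ∀ P Q : List Pt, IsPlanePath S P → A P → IsPlanePath S Q → A Q →
    ∃ k, FlipSeq S A k P Q

/-- `uv` is an edge of the boundary of the convex hull of `S`. -/
def HullEdge (S : Finset Pt) (u v : Pt) : Prop :=
  u ∈ S ∧ v ∈ S ∧ u ≠ v ∧ segment ℝ u v ⊆ frontier (convexHull ℝ (S : Set Pt))

/-- `p` is an extreme point (a vertex of the convex hull) of `S`. -/
def ExtremePt (S : Finset Pt) (p : Pt) : Prop :=
  p ∈ S ∧ p ∉ convexHull ℝ ((S.erase p : Finset Pt) : Set Pt)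

/-- `p` is a point of `S` lying strictly in the interior of the convex hull of `S`. -/
def InteriorPt (S : Finset Pt) (p : Pt) : Prop :=
  p ∈ S ∧ p ∈ interior (convexHull ℝ (S : Set Pt))

/-- Twice the signed area of the triangle `a b c` (orientation test). -/
def sign3 (a b c : Pt) : ℝ :=
  (b.1 - a.1) * (c.2 - a.2) - (b.2 - a.2) * (c.1 - a.1)

/-- `S` is a wheel set with center `c0`: points in general position, exactly one
point (`c0`) strictly inside the convex hull, all other points extreme. -/
def WheelSet (S : Finset Pt) (c0 : Pt) : Prop :=
  GenPos S ∧ 4 ≤ S.card ∧ InteriorPt S c0 ∧ ∀ x ∈ S, x ≠ c0 → ExtremePt S x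

/-- The number of convex-hull edges of `S` used by the path `l`. -/
def hullCount (S : Finset Pt) (l : List Pt) : ℕ :=
  ((edgeSet l).filter fun e => ∃ u v, e = s(u, v) ∧ HullEdge S u v).card

/-! ### Auxiliary lemmas for `stmt_19` -/

lemma sign3_affine' (u v p q : Pt) (c d : ℝ) (h : c + d = 1) :
    sign3 u v (c • p + d • q) = c * sign3 u v p + d * sign3 u v q := by
  have hd : d = 1 - c := by linarith
  subst hd
  simp only [sign3, Prod.fst_add, Prod.snd_add, Prod.smul_fst, Prod.smul_snd, smul_eq_mul]
  ring

lemma sign3_self1' (a b : Pt) : sign3 a b a = 0 := by simp [sign3]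

lemma sign3_self2' (a b : Pt) : sign3 a b b = 0 := by simp [sign3]; ring

lemma sign3_swap' (a b c : Pt) : sign3 b a c = - sign3 a b c := by simp [sign3]; ring

lemma dist_sq_pos' {u v : Pt} (huv : u ≠ v) : 0 < (v.1 - u.1)^2 + (v.2 - u.2)^2 := by
  have h' : ¬(u.1 = v.1 ∧ u.2 = v.2) := fun hc => huv (Prod.ext hc.1 hc.2)
  rcases not_and_or.1 h' with h1 | h1
  · have h2 : (v.1 - u.1) ≠ 0 := fun hc => h1 (by linarith)
    nlinarith [sq_nonneg (v.2 - u.2), sq_pos_of_ne_zero h2]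
  · have h2 : (v.2 - u.2) ≠ 0 := fun hc => h1 (by linarith)
    nlinarith [sq_nonneg (v.1 - u.1), sq_pos_of_ne_zero h2]

lemma exists_param' {u v r : Pt} (huv : u ≠ v) (h : sign3 u v r = 0) :
    ∃ t : ℝ, r = (1 - t) • u + t • v := by
  have hD : 0 < (v.1 - u.1)^2 + (v.2 - u.2)^2 := dist_sq_pos' huv
  set D := (v.1 - u.1)^2 + (v.2 - u.2)^2 with hDdef
  set N := (r.1 - u.1) * (v.1 - u.1) + (r.2 - u.2) * (v.2 - u.2) with hNdef
  refine ⟨N / D, ?_⟩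
  have hDne : D ≠ 0 := ne_of_gt hD
  simp only [sign3] at h
  have e1 : (r.1 - u.1) * D = N * (v.1 - u.1) := by
    rw [hNdef, hDdef]; linear_combination (u.2 - v.2) * h
  have e2 : (r.2 - u.2) * D = N * (v.2 - u.2) := by
    rw [hNdef, hDdef]; linear_combination (v.1 - u.1) * h
  have ht1 : N / D * (v.1 - u.1) = r.1 - u.1 := by
    rw [div_mul_eq_mul_div, ← e1, mul_div_assoc, div_self hDne, mul_one]
  have ht2 : N / D * (v.2 - u.2) = r.2 - u.2 := by
    rw [div_mul_eq_mul_div, ← e2, mul_div_assoc, div_self hDne, mul_one]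
  rw [Prod.ext_iff]
  constructor
  · simp only [Prod.fst_add, Prod.smul_fst, smul_eq_mul]
    have hre : (1 - N / D) * u.1 + N / D * v.1 = u.1 + N / D * (v.1 - u.1) := by ring
    rw [hre, ht1]; ring
  · simp only [Prod.snd_add, Prod.smul_snd, smul_eq_mul]
    have hre : (1 - N / D) * u.2 + N / D * v.2 = u.2 + N / D * (v.2 - u.2) := by ring
    rw [hre, ht2]; ring

lemma collinear_of_combo' {r p q : Pt} {c d : ℝ} (h : c + d = 1) (hr : r = c • p + d • q) :
    Collinear ℝ ({r, p, q} : Set Pt) := by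
  apply collinear_insert_of_mem_affineSpan_pair
  have hc : c = 1 - d := by linarith
  subst hc
  have : r = AffineMap.lineMap p q d := by
    rw [AffineMap.lineMap_apply_module]; exact hr
  rw [this]
  exact AffineMap.lineMap_mem_affineSpan_pair _ _ _

lemma genpos_ne_zero' {S : Finset Pt} (hG : GenPos S) {p q r : Pt}
    (hp : p ∈ S) (hq : q ∈ S) (hr : r ∈ S) (hpq : p ≠ q) (hpr : p ≠ r) (hqr : q ≠ r) :
    sign3 p q r ≠ 0 := by
  intro h0
  obtain ⟨t, ht⟩ := exists_param' hpq h0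
  have hcol : Collinear ℝ ({r, p, q} : Set Pt) := collinear_of_combo' (by ring) ht
  have hset : ({r, p, q} : Set Pt) = {p, q, r} := by ext z; simp; tauto
  exact hG p hp q hq r hr hpq hpr hqr (hset ▸ hcol)

lemma extreme_no_between' {S : Finset Pt} {a b q : Pt} (hea : ExtremePt S a)
    (hq : q ∈ convexHull ℝ (S : Set Pt)) (hb : b ∈ S) (hba : b ≠ a)
    (hmem : a ∈ openSegment ℝ q b) : False := by
  obtain ⟨haS, hnot⟩ := hea
  have hbe : b ∈ S.erase a := Finset.mem_erase.2 ⟨hba, hb⟩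
  have hne : ((S.erase a : Finset Pt) : Set Pt).Nonempty := ⟨b, by exact_mod_cast hbe⟩
  have hSet : (S : Set Pt) = insert a ((S.erase a : Finset Pt) : Set Pt) := by
    rw [← Finset.coe_insert, Finset.insert_erase haS]
  rw [hSet, convexHull_insert hne, mem_convexJoin] at hq
  obtain ⟨a', ha', y, hy, hqy⟩ := hq
  rw [Set.mem_singleton_iff] at ha'
  rw [ha'] at hqy
  simp only [segment, Set.mem_setOf_eq] at hqy
  simp only [openSegment, Set.mem_setOf_eq] at hmem
  obtain ⟨c₁, c₂, hc₁, hc₂, hcs, hcq⟩ := hqy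
  obtain ⟨d₁, d₂, hd₁, hd₂, hds, hda⟩ := hmem
  have hq1 : c₁ * a.1 + c₂ * y.1 = q.1 := by
    have := congrArg Prod.fst hcq
    simpa [smul_eq_mul] using this
  have hq2 : c₁ * a.2 + c₂ * y.2 = q.2 := by
    have := congrArg Prod.snd hcq
    simpa [smul_eq_mul] using this
  have ha1 : d₁ * q.1 + d₂ * b.1 = a.1 := by
    have := congrArg Prod.fst hda
    simpa [smul_eq_mul] using this
  have ha2 : d₁ * q.2 + d₂ * b.2 = a.2 := by
    have := congrArg Prod.snd hda
    simpa [smul_eq_mul] using this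
  have hα0 : 0 ≤ d₁ * c₂ := mul_nonneg hd₁.le hc₂
  have hαβ : 0 < d₁ * c₂ + d₂ := by positivity
  have key1 : (d₁ * c₂ + d₂) * a.1 = (d₁ * c₂) * y.1 + d₂ * b.1 := by
    linear_combination (-1 : ℝ) * ha1 - d₁ * hq1 + a.1 * d₁ * hcs + a.1 * hds
  have key2 : (d₁ * c₂ + d₂) * a.2 = (d₁ * c₂) * y.2 + d₂ * b.2 := by
    linear_combination (-1 : ℝ) * ha2 - d₁ * hq2 + a.2 * d₁ * hcs + a.2 * hds
  have hbC : b ∈ convexHull ℝ ((S.erase a : Finset Pt) : Set Pt) :=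
    subset_convexHull ℝ _ (by exact_mod_cast hbe)
  have hmemC : ((d₁ * c₂) / (d₁ * c₂ + d₂)) • y + (d₂ / (d₁ * c₂ + d₂)) • b ∈
      convexHull ℝ ((S.erase a : Finset Pt) : Set Pt) := by
    refine (convex_convexHull ℝ _) hy hbC (div_nonneg hα0 hαβ.le)
      (div_nonneg hd₂.le hαβ.le) ?_
    field_simp
  have heq : ((d₁ * c₂) / (d₁ * c₂ + d₂)) • y + (d₂ / (d₁ * c₂ + d₂)) • b = a := by
    rw [Prod.ext_iff]
    constructor
    · simp only [Prod.fst_add, Prod.smul_fst, smul_eq_mul]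
      have hre : (d₁ * c₂) / (d₁ * c₂ + d₂) * y.1 + d₂ / (d₁ * c₂ + d₂) * b.1
          = ((d₁ * c₂) * y.1 + d₂ * b.1) / (d₁ * c₂ + d₂) := by ring
      rw [hre, ← key1, mul_comm, mul_div_assoc, div_self hαβ.ne', mul_one]
    · simp only [Prod.snd_add, Prod.smul_snd, smul_eq_mul]
      have hre : (d₁ * c₂) / (d₁ * c₂ + d₂) * y.2 + d₂ / (d₁ * c₂ + d₂) * b.2
          = ((d₁ * c₂) * y.2 + d₂ * b.2) / (d₁ * c₂ + d₂) := by ring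
      rw [hre, ← key2, mul_comm, mul_div_assoc, div_self hαβ.ne', mul_one]
  rw [heq] at hmemC
  exact hnot hmemC

lemma cross' {S : Finset Pt} (hG : GenPos S) {a b w z : Pt}
    (haS : a ∈ S) (hbS : b ∈ S) (hwS : w ∈ S) (hzS : z ∈ S)
    (hea : ExtremePt S a) (heb : ExtremePt S b) (hab : a ≠ b)
    (hopp : sign3 a b w * sign3 a b z < 0) :
    (openSegment ℝ w z ∩ openSegment ℝ a b).Nonempty := by
  have hfw : sign3 a b w ≠ 0 := by
    intro h; rw [h] at hopp; simp at hopp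
  have hfz : sign3 a b z ≠ 0 := by
    intro h; rw [h] at hopp; simp at hopp
  have hwz : w ≠ z := by
    rintro rfl; nlinarith [sq_nonneg (sign3 a b w)]
  have hwa : w ≠ a := fun h => hfw (by rw [h]; exact sign3_self1' a b)
  have hwb : w ≠ b := fun h => hfw (by rw [h]; exact sign3_self2' a b)
  have hza : z ≠ a := fun h => hfz (by rw [h]; exact sign3_self1' a b)
  have hzb : z ≠ b := fun h => hfz (by rw [h]; exact sign3_self2' a b)
  have hden : sign3 a b w - sign3 a b z ≠ 0 := by
    intro h
    have : sign3 a b w = sign3 a b z := by linarith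
    rw [this] at hopp; nlinarith [sq_nonneg (sign3 a b z)]
  set t := sign3 a b w / (sign3 a b w - sign3 a b z) with htdef
  have hprod : 0 < sign3 a b w * (sign3 a b w - sign3 a b z) := by
    nlinarith [sq_pos_of_ne_zero hfw]
  have ht0 : 0 < t := by
    rcases mul_pos_iff.1 hprod with ⟨h1, h2⟩ | ⟨h1, h2⟩
    · exact div_pos h1 h2
    · exact div_pos_of_neg_of_neg h1 h2
  have hprod2 : 0 < (- sign3 a b z) * (sign3 a b w - sign3 a b z) := by
    nlinarith [sq_pos_of_ne_zero hfz]
  have ht1 : t < 1 := by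
    have h1t : 1 - t = (- sign3 a b z) / (sign3 a b w - sign3 a b z) := by
      rw [htdef]; field_simp; ring
    have : 0 < 1 - t := by
      rw [h1t]
      rcases mul_pos_iff.1 hprod2 with ⟨h1, h2⟩ | ⟨h1, h2⟩
      · exact div_pos h1 h2
      · exact div_pos_of_neg_of_neg h1 h2
    linarith
  set p := (1 - t) • w + t • z with hpdef
  have hp_open : p ∈ openSegment ℝ w z := ⟨1 - t, t, by linarith, ht0, by ring, rfl⟩
  have hfp : sign3 a b p = 0 := by
    rw [hpdef, sign3_affine' a b w z (1 - t) t (by ring), htdef]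
    field_simp
    ring
  have hpc : p ∈ convexHull ℝ (S : Set Pt) :=
    segment_subset_convexHull (Finset.mem_coe.2 hwS) (Finset.mem_coe.2 hzS)
      (openSegment_subset_segment ℝ w z hp_open)
  obtain ⟨r, hr⟩ := exists_param' hab hfp
  have hr1 : p.1 = (1 - r) * a.1 + r * b.1 := by
    have := congrArg Prod.fst hr; simpa [smul_eq_mul] using this
  have hr2 : p.2 = (1 - r) * a.2 + r * b.2 := by
    have := congrArg Prod.snd hr; simpa [smul_eq_mul] using this
  rcases lt_trichotomy r 0 with hrc | hrc | hrc
  · exfalso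
    have h1r : (0:ℝ) < 1 - r := by linarith
    have hmem : a ∈ openSegment ℝ p b := by
      refine ⟨1 / (1 - r), -r / (1 - r), div_pos one_pos h1r, div_pos (by linarith) h1r,
        by field_simp <;> ring, ?_⟩
      rw [Prod.ext_iff]
      constructor
      · simp only [Prod.fst_add, Prod.smul_fst, smul_eq_mul]
        field_simp
        linear_combination hr1
      · simp only [Prod.snd_add, Prod.smul_snd, smul_eq_mul]
        field_simp
        linear_combination hr2
    exact extreme_no_between' hea hpc hbS hab.symm hmem
  · exfalso
    have hpa : p = a := by
      subst hrc; rw [hr]; simp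
    rw [hpa] at hp_open
    simp only [openSegment, Set.mem_setOf_eq] at hp_open
    obtain ⟨c, d, hc, hd, hcd, hcomb⟩ := hp_open
    have hcol : Collinear ℝ ({a, w, z} : Set Pt) := collinear_of_combo' hcd hcomb.symm
    exact hG a haS w hwS z hzS hwa.symm hza.symm hwz hcol
  · rcases lt_trichotomy r 1 with hrc1 | hrc1 | hrc1
    · exact ⟨p, hp_open, ⟨1 - r, r, by linarith, hrc, by ring, hr.symm⟩⟩
    · exfalso
      have hpb : p = b := by
        subst hrc1; rw [hr]; simp
      rw [hpb] at hp_open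
      simp only [openSegment, Set.mem_setOf_eq] at hp_open
      obtain ⟨c, d, hc, hd, hcd, hcomb⟩ := hp_open
      have hcol : Collinear ℝ ({b, w, z} : Set Pt) := collinear_of_combo' hcd hcomb.symm
      exact hG b hbS w hwS z hzS hwb.symm hzb.symm hwz hcol
    · exfalso
      have hr0 : (0:ℝ) < r := by linarith
      have hmem : b ∈ openSegment ℝ p a := by
        refine ⟨1 / r, (r - 1) / r, div_pos one_pos hr0, div_pos (by linarith) hr0,
          by field_simp <;> ring, ?_⟩
        rw [Prod.ext_iff]
        constructor
        · simp only [Prod.fst_add, Prod.smul_fst, smul_eq_mul]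
          field_simp
          linear_combination hr1
        · simp only [Prod.snd_add, Prod.smul_snd, smul_eq_mul]
          field_simp
          linear_combination hr2
      exact extreme_no_between' heb hpc haS hab hmem

lemma hull_edge_of_side' {S : Finset Pt} {a b : Pt} (haS : a ∈ S) (hbS : b ∈ S) (hab : a ≠ b)
    {s : ℝ} (hs : s ≠ 0)
    (hside : ∀ y ∈ S, 0 ≤ s * sign3 a b y) : HullEdge S a b := by
  refine ⟨haS, hbS, hab, ?_⟩
  have hC : IsClosed (convexHull ℝ (S : Set Pt)) := S.finite_toSet.isClosed_convexHull (𝕜 := ℝ)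
  have hconv : Convex ℝ {y : Pt | 0 ≤ s * sign3 a b y} := by
    intro p hp q hq c d hc hd hcd
    simp only [Set.mem_setOf_eq] at *
    rw [sign3_affine' a b p q c d hcd]
    nlinarith
  have hsub : convexHull ℝ (S : Set Pt) ⊆ {y : Pt | 0 ≤ s * sign3 a b y} :=
    convexHull_min (fun y hy => hside y (by exact_mod_cast hy)) hconv
  intro z hz
  have hzC : z ∈ convexHull ℝ (S : Set Pt) :=
    segment_subset_convexHull (Finset.mem_coe.2 haS) (Finset.mem_coe.2 hbS) hz
  rw [hC.frontier_eq]
  refine ⟨hzC, ?_⟩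
  intro hzI
  simp only [segment, Set.mem_setOf_eq] at hz
  obtain ⟨c, d, hc, hd, hcd, hcomb⟩ := hz
  have hfz : sign3 a b z = 0 := by
    rw [← hcomb, sign3_affine' a b a b c d hcd, sign3_self1', sign3_self2']
    ring
  rw [mem_interior_iff_mem_nhds, Metric.mem_nhds_iff] at hzI
  obtain ⟨ε, hε, hball⟩ := hzI
  set dv : Pt := (s * (b.2 - a.2), -(s * (b.1 - a.1))) with hdv
  have hD : 0 < (b.1 - a.1)^2 + (b.2 - a.2)^2 := dist_sq_pos' hab
  have hs2 : 0 < s^2 := sq_pos_of_ne_zero hs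
  have hdne : dv ≠ 0 := by
    intro h
    have h1 : s * (b.2 - a.2) = 0 := by
      have := congrArg Prod.fst h; simpa [hdv] using this
    have h2 : s * (b.1 - a.1) = 0 := by
      have := congrArg Prod.snd h; simpa [hdv] using this
    rcases mul_eq_zero.1 h1 with h' | h'
    · exact hs h'
    · rcases mul_eq_zero.1 h2 with h'' | h''
      · exact hs h''
      · nlinarith
  have hnd : 0 < ‖dv‖ := norm_pos_iff.2 hdne
  set μ := ε / (2 * ‖dv‖) with hμdef
  have hμ : 0 < μ := by positivity
  have hmem : z + μ • dv ∈ Metric.ball z ε := by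
    rw [Metric.mem_ball, dist_self_add_left, norm_smul, Real.norm_eq_abs, abs_of_pos hμ, hμdef]
    rw [div_mul_eq_mul_div, mul_comm (2 : ℝ) ‖dv‖, ← div_div, mul_div_assoc,
      div_self hnd.ne', mul_one]
    linarith
  have hin : 0 ≤ s * sign3 a b (z + μ • dv) := hsub (hball hmem)
  have hcomp : sign3 a b (z + μ • dv) =
      sign3 a b z - μ * s * ((b.1 - a.1)^2 + (b.2 - a.2)^2) := by
    simp only [sign3, hdv, Prod.fst_add, Prod.snd_add, Prod.smul_fst, Prod.smul_snd,
      smul_eq_mul]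
    ring
  rw [hcomp, hfz] at hin
  nlinarith [mul_pos (mul_pos hμ hs2) hD]

lemma pathEdges_cons_cons' (a b : Pt) (l : List Pt) :
    pathEdges (a :: b :: l) = (a, b) :: pathEdges (b :: l) := rfl

lemma mem_of_pathEdges' {l : List Pt} {x y : Pt} (h : (x, y) ∈ pathEdges l) :
    x ∈ l ∧ y ∈ l := by
  have h2 := List.of_mem_zip h
  exact ⟨h2.1, List.mem_of_mem_tail h2.2⟩

lemma ne_of_pathEdges' : ∀ {l : List Pt}, l.Nodup → ∀ {x y : Pt}, (x, y) ∈ pathEdges l → x ≠ y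
  | [], _, x, y, h => by simp [pathEdges] at h
  | [a], _, x, y, h => by simp [pathEdges] at h
  | a :: b :: t, hnd, x, y, h => by
    rw [pathEdges_cons_cons'] at h
    rcases List.mem_cons.1 h with h | h
    · obtain ⟨rfl, rfl⟩ : x = a ∧ y = b := by simpa using h
      intro hxy
      exact (List.nodup_cons.1 hnd).1 (hxy ▸ List.mem_cons_self)
    · exact ne_of_pathEdges' (List.nodup_cons.1 hnd).2 h

lemma exists_edge' : ∀ {l : List Pt} {w : Pt}, w ∈ l → 2 ≤ l.length →
    ∃ x, (w, x) ∈ pathEdges l ∨ (x, w) ∈ pathEdges l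
  | [], w, hw, hlen => by simp at hw
  | [a], w, hw, hlen => by simp at hlen
  | a :: b :: t, w, hw, hlen => by
    rw [pathEdges_cons_cons']
    rcases List.mem_cons.1 hw with rfl | hw'
    · exact ⟨b, Or.inl (List.mem_cons_self)⟩
    · match t, hw' with
      | [], hw' =>
        have : w = b := by simpa using hw'
        subst this
        exact ⟨a, Or.inr (List.mem_cons_self)⟩
      | c :: t', hw' =>
        obtain ⟨x, hx⟩ := exists_edge' hw' (by simp)
        exact ⟨x, hx.imp (List.mem_cons_of_mem _) (List.mem_cons_of_mem _)⟩

lemma exists_nonradial' {P : List Pt} (hnd : P.Nodup) (hlen : 4 ≤ P.length) (c0 : Pt) :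
    ∃ e ∈ pathEdges P, e.1 ≠ c0 ∧ e.2 ≠ c0 := by
  rcases P with _ | ⟨p0, _ | ⟨p1, _ | ⟨p2, _ | ⟨p3, rest⟩⟩⟩⟩
  · simp at hlen
  · simp at hlen
  · simp at hlen
  · simp at hlen
  · have h01 : (p0, p1) ∈ pathEdges (p0 :: p1 :: p2 :: p3 :: rest) :=
      List.mem_cons_self
    have h12 : (p1, p2) ∈ pathEdges (p0 :: p1 :: p2 :: p3 :: rest) := by
      rw [pathEdges_cons_cons']
      exact List.mem_cons_of_mem _ (List.mem_cons_self)
    have h23 : (p2, p3) ∈ pathEdges (p0 :: p1 :: p2 :: p3 :: rest) := by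
      rw [pathEdges_cons_cons', pathEdges_cons_cons']
      exact List.mem_cons_of_mem _ (List.mem_cons_of_mem _ (List.mem_cons_self))
    simp only [List.nodup_cons, List.mem_cons, not_or] at hnd
    obtain ⟨⟨hn01, hn02, hn03, -⟩, ⟨hn12, hn13, -⟩, ⟨hn23, -⟩, -⟩ := hnd
    by_cases h1 : p1 = c0
    · exact ⟨(p2, p3), h23, fun h => hn12 (h1.trans h.symm), fun h => hn13 (h1.trans h.symm)⟩
    · by_cases h2 : p2 = c0
      · exact ⟨(p0, p1), h01, fun h => hn02 (h.trans h2.symm), h1⟩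
      · exact ⟨(p1, p2), h12, h1, h2⟩

/-- Every plane spanning path on a wheel set contains at least one convex hull edge. -/
theorem stmt_19 (S : Finset Pt) (c0 : Pt) (hW : WheelSet S c0)
    (P : List Pt) (hP : IsPlanePath S P) :
    ∃ e ∈ pathEdges P, HullEdge S e.1 e.2 := by
  by_contra hcon
  push_neg at hcon
  obtain ⟨hG, hcard, hint, hext⟩ := hW
  obtain ⟨hnd, htf, hnc⟩ := hP
  have hc0S : c0 ∈ S := hint.1
  have hlenP : P.length = S.card := by
    rw [← htf, List.toFinset_card_of_nodup hnd]
  have hlen4 : 4 ≤ P.length := by omega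
  have hPmem : ∀ {x : Pt}, x ∈ P → x ∈ S := by
    intro x hx; rw [← htf]; exact List.mem_toFinset.2 hx
  have hSmem : ∀ {x : Pt}, x ∈ S → x ∈ P := by
    intro x hx; rw [← htf] at hx; exact List.mem_toFinset.1 hx
  have hNC : ∀ {e f : Pt × Pt}, e ∈ pathEdges P → f ∈ pathEdges P → e ≠ f →
      openSegment ℝ e.1 e.2 ∩ openSegment ℝ f.1 f.2 = ∅ := by
    intro e f he hf hne
    haveI : Std.Symm (fun e f : Pt × Pt => openSegment ℝ e.1 e.2 ∩ openSegment ℝ f.1 f.2 = ∅) :=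
      ⟨fun x y h => by rw [Set.inter_comm]; exact h⟩
    exact hnc.forall he hf hne
  obtain ⟨e₀, he₀P, he₀1, he₀2⟩ := exists_nonradial' hnd hlen4 c0
  have hTne : ((pathEdges P).toFinset.filter (fun e => e.1 ≠ c0 ∧ e.2 ≠ c0)).Nonempty :=
    ⟨e₀, by rw [Finset.mem_filter, List.mem_toFinset]; exact ⟨he₀P, he₀1, he₀2⟩⟩
  obtain ⟨e₁, he₁T, hmin⟩ :=
    ((pathEdges P).toFinset.filter (fun e => e.1 ≠ c0 ∧ e.2 ≠ c0)).exists_min_image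
      (fun e => (S.filter (fun y => sign3 e.1 e.2 y * sign3 e.1 e.2 c0 < 0)).card) hTne
  obtain ⟨a, b⟩ := e₁
  rw [Finset.mem_filter, List.mem_toFinset] at he₁T
  obtain ⟨habP, hac0, hbc0⟩ := he₁T
  have haP := (mem_of_pathEdges' habP).1
  have hbP := (mem_of_pathEdges' habP).2
  have haS : a ∈ S := hPmem haP
  have hbS : b ∈ S := hPmem hbP
  have hab : a ≠ b := ne_of_pathEdges' hnd habP
  have hea : ExtremePt S a := hext a haS hac0
  have heb : ExtremePt S b := hext b hbS hbc0
  have hs : sign3 a b c0 ≠ 0 := genpos_ne_zero' hG haS hbS hc0S hab hac0 hbc0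
  by_cases hO : S.filter (fun y => sign3 a b y * sign3 a b c0 < 0) = ∅
  · -- no point on the far side: (a,b) is a hull edge, contradiction
    refine hcon (a, b) habP ?_
    refine hull_edge_of_side' haS hbS hab hs ?_
    intro y hy
    have hyO : ¬ (sign3 a b y * sign3 a b c0 < 0) := by
      intro hlt
      have hmem : y ∈ S.filter (fun y => sign3 a b y * sign3 a b c0 < 0) :=
        Finset.mem_filter.2 ⟨hy, hlt⟩
      rw [hO] at hmem
      simp at hmem
    push_neg at hyO
    nlinarith [hyO]
  · obtain ⟨w, hwO⟩ := Finset.nonempty_of_ne_empty hO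
    rw [Finset.mem_filter] at hwO
    obtain ⟨hwS, hwlt⟩ := hwO
    have hfw : sign3 a b w ≠ 0 := fun h => by rw [h] at hwlt; simp at hwlt
    have hwa : w ≠ a := fun h => hfw (by rw [h]; exact sign3_self1' a b)
    have hwb : w ≠ b := fun h => hfw (by rw [h]; exact sign3_self2' a b)
    have hwc0 : w ≠ c0 := by
      intro h
      rw [h] at hwlt
      nlinarith [sq_nonneg (sign3 a b c0)]
    obtain ⟨x, hedge⟩ := exists_edge' (hSmem hwS) (by omega)
    have hxP : x ∈ P := by
      rcases hedge with h | h
      · exact (mem_of_pathEdges' h).2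
      · exact (mem_of_pathEdges' h).1
    have hxS : x ∈ S := hPmem hxP
    have hwx : w ≠ x := by
      rcases hedge with h | h
      · exact ne_of_pathEdges' hnd h
      · exact (ne_of_pathEdges' hnd h).symm
    have hcontra_cross : ∀ z : Pt, ((w, z) ∈ pathEdges P ∨ (z, w) ∈ pathEdges P) →
        (openSegment ℝ w z ∩ openSegment ℝ a b).Nonempty → False := by
      rintro z hz ⟨q, hq1, hq2⟩
      rcases hz with h | h
      · have hemp := hNC h habP (fun hEq => hwa (congrArg Prod.fst hEq))
        exact Set.eq_empty_iff_forall_notMem.1 hemp q ⟨hq1, hq2⟩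
      · have hemp := hNC h habP (fun hEq => hwb (congrArg Prod.snd hEq))
        refine Set.eq_empty_iff_forall_notMem.1 hemp q ⟨?_, hq2⟩
        rw [openSegment_symm]
        exact hq1
    by_cases hxc0 : x = c0
    · subst hxc0
      exact hcontra_cross x hedge (cross' hG haS hbS hwS hc0S hea heb hab hwlt)
    · have hex : ExtremePt S x := hext x hxS hxc0
      have hew : ExtremePt S w := hext w hwS hwc0
      by_cases hxside : 0 < sign3 a b c0 * sign3 a b x
      · have hopp2 : sign3 a b w * sign3 a b x < 0 := by
          by_contra hge
          push_neg at hge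
          nlinarith [mul_neg_of_neg_of_pos hwlt hxside, mul_nonneg hge (sq_nonneg (sign3 a b c0))]
        exact hcontra_cross x hedge (cross' hG haS hbS hwS hxS hea heb hab hopp2)
      · push_neg at hxside
        have hsub : S.filter (fun y => sign3 w x y * sign3 w x c0 < 0) ⊆
            S.filter (fun y => sign3 a b y * sign3 a b c0 < 0) := by
          intro y hy
          rw [Finset.mem_filter] at hy
          obtain ⟨hyS, hylt⟩ := hy
          rw [Finset.mem_filter]
          refine ⟨hyS, ?_⟩
          by_contra hge
          push_neg at hge
          obtain ⟨q, hq1, hq2⟩ := cross' hG hwS hxS hyS hc0S hew hex hwx hylt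
          simp only [openSegment, Set.mem_setOf_eq] at hq1 hq2
          obtain ⟨c, d, hc, hd, hcd, hcq⟩ := hq2
          obtain ⟨c', d', hc', hd', hcd', hcq'⟩ := hq1
          have e1 : sign3 a b c0 * sign3 a b q =
              c * (sign3 a b w * sign3 a b c0) + d * (sign3 a b c0 * sign3 a b x) := by
            rw [← hcq, sign3_affine' a b w x c d hcd]; ring
          have e2 : sign3 a b c0 * sign3 a b q =
              c' * (sign3 a b y * sign3 a b c0) + d' * (sign3 a b c0)^2 := by
            rw [← hcq', sign3_affine' a b y c0 c' d' hcd']; ring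
          nlinarith [mul_neg_of_pos_of_neg hc hwlt,
            mul_nonpos_of_nonneg_of_nonpos hd.le hxside,
            mul_nonneg hc'.le hge, mul_pos hd' (sq_pos_of_ne_zero hs)]
        have hwnotO : w ∉ S.filter (fun y => sign3 w x y * sign3 w x c0 < 0) := by
          rw [Finset.mem_filter]
          rintro ⟨-, hlt⟩
          rw [sign3_self1'] at hlt
          simp at hlt
        have hssub : S.filter (fun y => sign3 w x y * sign3 w x c0 < 0) ⊂
            S.filter (fun y => sign3 a b y * sign3 a b c0 < 0) :=
          ⟨hsub, fun hsub' => hwnotO (hsub' (Finset.mem_filter.2 ⟨hwS, hwlt⟩))⟩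
        have hltcard := Finset.card_lt_card hssub
        rcases hedge with h | h
        · have hge := hmin (w, x)
            (by rw [Finset.mem_filter, List.mem_toFinset]; exact ⟨h, hwc0, hxc0⟩)
          simp only at hge
          omega
        · have hge := hmin (x, w)
            (by rw [Finset.mem_filter, List.mem_toFinset]; exact ⟨h, hxc0, hwc0⟩)
          simp only at hge
          have hsymm : S.filter (fun y => sign3 x w y * sign3 x w c0 < 0) =
              S.filter (fun y => sign3 w x y * sign3 w x c0 < 0) := by
            apply Finset.filter_congr
            intro y _
            rw [sign3_swap' w x y, sign3_swap' w x c0, neg_mul_neg]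
          rw [hsymm] at hge
          omega
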